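/- For all nonnegative integers p and q, the signed count of (p,q)-shuffles equals Y_{p,q}; that is, the sum over all permutations σ of {1,…,p+q} that preserve the relative order of the first p elements and of the last q elements, of the sign of σ, equals binom(⌊(p+q)/2⌋, ⌊p/2⌋) if p or q is even, and equals 0 if both p and q are odd. -/

import Mathlib

/-- A `(p,q)`-shuffle: a permutation of `Fin (p+q)` preserving the relative
order of the first `p` elements and of the last `q` elements. -/
def IsShuffle (p q : ℕ) (σ : Equiv.Perm (Fin (p + q))) : Prop :=
  ∀ i j : Fin (p + q), i < j → ((j : ℕ) < p ∨ p ≤ (i : ℕ)) → σ i < σ j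

instance (p q : ℕ) : DecidablePred (IsShuffle p q) := fun σ => by
  unfold IsShuffle; infer_instance

/-- The signed count of `(p,q)`-shuffles. -/
def shuffleSum (p q : ℕ) : ℤ :=
  ∑ σ ∈ Finset.univ.filter (IsShuffle p q), (Equiv.Perm.sign σ : ℤ)

/-- `Y p q = binom(⌊(p+q)/2⌋, ⌊p/2⌋)` if `p` or `q` is even, and `0` otherwise. -/
def Y (p q : ℕ) : ℤ :=
  if Even p ∨ Even q then (((p + q) / 2).choose (p / 2) : ℤ) else 0


/-! Every permutation `σ` of `Fin (m + 1)` factors uniquely as `succLift τ * cycleRange i`, with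
`i = σ⁻¹ 0` and sign `(-1) ^ i * sign τ`. In a `(p, q)`-shuffle the position sent to `0` is the
first of one of the two blocks, so `i = 0` or `i = p`, and `τ` is then a `(p - 1, q)`- resp. a
`(p, q - 1)`-shuffle. Hence the signed count `S` obeys
`S (p + 1) (q + 1) = S p (q + 1) + (-1) ^ (p + 1) * S (p + 1) q` with `S p 0 = S 0 q = 1`,
and `Y` satisfies the same recursion (by Pascal's rule in the odd-odd case). -/

open Equiv Equiv.Perm Finset

def IsShuffleAt {n : ℕ} (k : ℕ) (σ : Perm (Fin n)) : Prop :=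
  ∀ i j : Fin n, i < j → ((j : ℕ) < k ∨ k ≤ (i : ℕ)) → σ i < σ j

instance {n : ℕ} (k : ℕ) : DecidablePred (IsShuffleAt (n := n) k) := fun σ => by
  unfold IsShuffleAt; infer_instance

def signedShuffleCount (n k : ℕ) : ℤ :=
  ∑ σ ∈ univ.filter (IsShuffleAt (n := n) k), (sign σ : ℤ)

theorem shuffleSum_eq_signedShuffleCount (p q : ℕ) :
    shuffleSum p q = signedShuffleCount (p + q) p :=
  rfl

theorem isShuffleAt_iff_eq_one {n k : ℕ} (h : k = 0 ∨ n ≤ k) {σ : Perm (Fin n)} :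
    IsShuffleAt k σ ↔ σ = 1 := by
  refine ⟨fun hσ => ?_, fun hσ i j hij _ => hσ ▸ hij⟩
  have hmono : StrictMono σ := fun i j hij => hσ i j hij (by omega)
  exact Perm.ext fun i => congrFun hmono.eq_id i

theorem signedShuffleCount_eq_one {n k : ℕ} (h : k = 0 ∨ n ≤ k) :
    signedShuffleCount n k = 1 := by
  simp [signedShuffleCount, isShuffleAt_iff_eq_one h, filter_eq']

namespace Equiv.Perm

variable {m : ℕ}

def succLift (τ : Perm (Fin m)) : Perm (Fin (m + 1)) :=
  decomposeFin.symm (0, τ)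

@[simp] theorem succLift_zero (τ : Perm (Fin m)) : succLift τ 0 = 0 :=
  decomposeFin_symm_apply_zero 0 τ

@[simp] theorem succLift_succ (τ : Perm (Fin m)) (x : Fin m) :
    succLift τ x.succ = (τ x).succ := by
  simp [succLift]

@[simp] theorem sign_succLift (τ : Perm (Fin m)) : sign (succLift τ) = sign τ := by
  simp [succLift]

theorem succLift_injective : Function.Injective (succLift (m := m)) := fun _ _ h =>
  congrArg Prod.snd (decomposeFin.symm.injective h)

theorem succLift_mul_cycleRange_self (τ : Perm (Fin m)) (i : Fin (m + 1)) :
    (succLift τ * i.cycleRange) i = 0 := by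
  simp

theorem succLift_mul_cycleRange_succAbove (τ : Perm (Fin m)) (i : Fin (m + 1)) (x : Fin m) :
    (succLift τ * i.cycleRange) (i.succAbove x) = (τ x).succ := by
  simp

theorem sign_succLift_mul_cycleRange (τ : Perm (Fin m)) (i : Fin (m + 1)) :
    sign (succLift τ * i.cycleRange) = (-1) ^ (i : ℕ) * sign τ := by
  rw [map_mul, sign_succLift, Fin.sign_cycleRange, mul_comm]

theorem bijective_succLift_mul_cycleRange :
    Function.Bijective fun iτ : Fin (m + 1) × Perm (Fin m) => succLift iτ.2 * iτ.1.cycleRange := by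
  refine (Fintype.bijective_iff_injective_and_card _).mpr ⟨?_, ?_⟩
  · rintro ⟨i, τ⟩ ⟨j, υ⟩ (h : succLift τ * i.cycleRange = succLift υ * j.cycleRange)
    have hij : i = j := by
      apply (succLift υ * j.cycleRange).injective
      rw [succLift_mul_cycleRange_self, ← h, succLift_mul_cycleRange_self]
    subst hij
    exact Prod.ext rfl (succLift_injective (mul_right_cancel h))
  · simp [Fintype.card_perm, Nat.factorial_succ]

end Equiv.Perm

theorem Fin.val_succAbove {n : ℕ} (p : Fin (n + 1)) (i : Fin n) :
    (p.succAbove i : ℕ) = if (i : ℕ) < p then (i : ℕ) else (i : ℕ) + 1 := by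
  unfold Fin.succAbove
  split_ifs <;> simp_all [Fin.lt_def]

theorem IsShuffleAt.eq_zero_or_val_eq {n k : ℕ} {σ : Perm (Fin (n + 1))} (hσ : IsShuffleAt k σ)
    {i : Fin (n + 1)} (hi : σ i = 0) : (i : ℕ) = 0 ∨ (i : ℕ) = k := by
  rcases lt_trichotomy (i : ℕ) k with hlt | heq | hgt
  · refine .inl (by_contra fun hne => ?_)
    have := hσ 0 i (Fin.pos_iff_ne_zero.mpr fun h => hne (by simp [h])) (.inl hlt)
    exact Fin.not_lt_zero _ (hi ▸ this)
  · exact .inr heq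
  · have := hσ ⟨k, by omega⟩ i (Fin.lt_def.mpr hgt) (.inr le_rfl)
    exact (Fin.not_lt_zero _ (hi ▸ this)).elim

theorem isShuffleAt_succLift_mul_cycleRange_iff {m k k' : ℕ} {τ : Perm (Fin m)}
    {i : Fin (m + 1)} (hi : (i : ℕ) = 0 ∨ (i : ℕ) = k)
    (hk : ∀ x y : Fin m,
      (i.succAbove y : ℕ) < k ∨ k ≤ (i.succAbove x : ℕ) ↔ (y : ℕ) < k' ∨ k' ≤ (x : ℕ)) :
    IsShuffleAt k (succLift τ * i.cycleRange) ↔ IsShuffleAt k' τ := by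
  refine ⟨fun H x y hxy hcond => ?_, fun H a b hab hcond => ?_⟩
  · simpa only [succLift_mul_cycleRange_succAbove, Fin.succ_lt_succ_iff] using
      H _ _ (Fin.succAbove_lt_succAbove_iff.mpr hxy) ((hk x y).mpr hcond)
  rcases Fin.eq_self_or_eq_succAbove i a with rfl | ⟨x, rfl⟩
  · obtain ⟨y, rfl⟩ := Fin.exists_succAbove_eq hab.ne'
    simp [Fin.succ_pos]
  rcases Fin.eq_self_or_eq_succAbove i b with rfl | ⟨y, rfl⟩
  · rw [Fin.lt_def] at hab
    omega
  · have hxy := Fin.succAbove_lt_succAbove_iff.mp hab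
    simpa only [succLift_mul_cycleRange_succAbove, Fin.succ_lt_succ_iff] using
      H x y hxy ((hk x y).mp hcond)

theorem signedShuffleCount_succ {m k : ℕ} (hk : 0 < k) (hkm : k ≤ m) :
    signedShuffleCount (m + 1) k =
      signedShuffleCount m (k - 1) + (-1) ^ k * signedShuffleCount m k := by
  let c : Fin (m + 1) := ⟨k, by omega⟩
  let term (i : Fin (m + 1)) (τ : Perm (Fin m)) : ℤ :=
    if IsShuffleAt k (succLift τ * i.cycleRange) then (-1) ^ (i : ℕ) * (sign τ : ℤ) else 0
  have h_decomp : signedShuffleCount (m + 1) k = ∑ i, ∑ τ, term i τ := by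
    rw [signedShuffleCount, sum_filter, ← bijective_succLift_mul_cycleRange.sum_comp,
      Fintype.sum_prod_type]
    simp only [term, sign_succLift_mul_cycleRange, Units.val_mul, Units.val_pow_eq_pow_val,
      Units.val_neg, Units.val_one]
  have h_vanish (i : Fin (m + 1)) (hi : i ≠ 0 ∧ i ≠ c) : ∑ τ, term i τ = 0 := by
    refine sum_eq_zero fun τ _ => if_neg fun H => ?_
    rcases H.eq_zero_or_val_eq (succLift_mul_cycleRange_self τ i) with h | h
    exacts [hi.1 (Fin.ext h), hi.2 (Fin.ext h)]
  have h_zero (τ : Perm (Fin m)) :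
      IsShuffleAt k (succLift τ) ↔ IsShuffleAt (k - 1) τ := by
    simpa using isShuffleAt_succLift_mul_cycleRange_iff (τ := τ) (i := 0) (k' := k - 1)
      (.inl rfl) fun x y => by simp only [Fin.succAbove_zero, Fin.val_succ]; omega
  have h_c (τ : Perm (Fin m)) :
      IsShuffleAt k (succLift τ * c.cycleRange) ↔ IsShuffleAt k τ :=
    isShuffleAt_succLift_mul_cycleRange_iff (.inr rfl) fun x y => by
      simp only [Fin.val_succAbove]
      split_ifs <;> simp_all [c] <;> omega
  rw [h_decomp, Fintype.sum_eq_add 0 c (Fin.ne_of_val_ne hk.ne) h_vanish, signedShuffleCount,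
    signedShuffleCount, sum_filter, sum_filter, mul_sum]
  simp [term, h_zero, h_c, c]

theorem shuffleSum_zero_left (q : ℕ) : shuffleSum 0 q = 1 :=
  signedShuffleCount_eq_one (.inl rfl)

theorem shuffleSum_zero_right (p : ℕ) : shuffleSum p 0 = 1 :=
  signedShuffleCount_eq_one (.inr le_rfl)

theorem shuffleSum_succ_succ (p q : ℕ) :
    shuffleSum (p + 1) (q + 1) = shuffleSum p (q + 1) + (-1) ^ (p + 1) * shuffleSum (p + 1) q := by
  simp only [shuffleSum_eq_signedShuffleCount]
  rw [show p + 1 + (q + 1) = p + (q + 1) + 1 by ring, signedShuffleCount_succ (by omega) (by omega),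
    Nat.add_sub_cancel, Nat.add_right_comm]
  rfl

theorem Y_zero_left (q : ℕ) : Y 0 q = 1 := by
  simp [Y]

theorem Y_zero_right (p : ℕ) : Y p 0 = 1 := by
  simp [Y]

theorem Y_succ_succ (p q : ℕ) :
    Y (p + 1) (q + 1) = Y p (q + 1) + (-1) ^ (p + 1) * Y (p + 1) q := by
  obtain ⟨a, rfl | rfl⟩ := Nat.even_or_odd' p <;> obtain ⟨b, rfl | rfl⟩ := Nat.even_or_odd' q <;>
    simp +arith [Y, Nat.even_add_one, pow_succ, pow_mul] <;>
    simp [← mul_add, Nat.mul_add_div, add_assoc]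
  -- `p` and `q` both odd: Pascal's rule
  rw [show a + (b + 2) = a + (b + 1) + 1 by ring, Nat.choose_succ_succ]
  push_cast
  ring

theorem signed_count_shuffles (p q : ℕ) : shuffleSum p q = Y p q := by
  induction p generalizing q with
  | zero => rw [shuffleSum_zero_left, Y_zero_left]
  | succ p ihp =>
    induction q with
    | zero => rw [shuffleSum_zero_right, Y_zero_right]
    | succ q ihq => rw [shuffleSum_succ_succ, Y_succ_succ, ihp, ihq]
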